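/- arXiv:1510.06680 — 2 statements merged into one kernel-verified Lean document; each statement's English description precedes it below -/
import Mathlib

section
/- Assume Hypotheses 4.1. For pairwise distinct x,y,z ∈ Ω: (a) the order of the permutation [x,y]·[y,z] is 2 if x ∈ \overline{y,z}, and is 3 if x ∉ \overline{y,z}; (b) if x ∉ \overline{y,z} then [z,x]·[x,y]·[y,z] = [x,y]. -/
open Equiv

variable {Ω : Type*}

/-- `(Ω, B)` is a `2-(n,4,lam)` design: `Ω` has `n` points, every line has 4 points,
and every 2-element subset of `Ω` is contained in exactly `lam` lines. -/
def IsDesign [Fintype Ω] (B : Set (Finset Ω)) (n lam : ℕ) : Prop :=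
  Fintype.card Ω = n ∧
  (∀ L ∈ B, L.card = 4) ∧
  (∀ p : Finset Ω, p.card = 2 → {L ∈ B | p ⊆ L}.ncard = lam)

/-- A design is supersimple if any two distinct lines intersect in at most two points. -/
def Supersimple [DecidableEq Ω] (B : Set (Finset Ω)) : Prop :=
  ∀ L₁ ∈ B, ∀ L₂ ∈ B, L₁ ≠ L₂ → (L₁ ∩ L₂).card ≤ 2

/-- Condition (△): the symmetric difference of two lines meeting in two points is a line. -/
def SymmDiffCond [DecidableEq Ω] (B : Set (Finset Ω)) : Prop :=
  ∀ L₁ ∈ B, ∀ L₂ ∈ B, (L₁ ∩ L₂).card = 2 → symmDiff L₁ L₂ ∈ B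

/-- The collinear triples: 3-element subsets contained in some line. -/
def collinearTriples (B : Set (Finset Ω)) : Set (Finset Ω) :=
  { t | t.card = 3 ∧ ∃ L ∈ B, t ⊆ L }

/-- `(Ω, C)` is a regular two-graph: `C` is a set of 3-element subsets, every 2-element
subset lies in exactly `μ` members of `C` for a constant `μ`, and every 4-element subset
contains exactly 0, 2 or 4 members of `C`. -/
def IsRegularTwoGraph (C : Set (Finset Ω)) : Prop :=
  (∀ t ∈ C, t.card = 3) ∧
  (∃ μ : ℕ, ∀ p : Finset Ω, p.card = 2 → {t ∈ C | p ⊆ t}.ncard = μ) ∧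
  (∀ q : Finset Ω, q.card = 4 →
    {t ∈ C | t ⊆ q}.ncard = 0 ∨ {t ∈ C | t ⊆ q}.ncard = 2 ∨ {t ∈ C | t ⊆ q}.ncard = 4)

/-- `mv a b` is the elementary move `[a,b]`: it is the identity when `a = b`; when `a ≠ b`
it interchanges `a` and `b`, interchanges `x` and `y` whenever `{a,b,x,y}` is a line, and
fixes every point not collinear with `a, b`. -/
def IsElemMoveFn [DecidableEq Ω] (B : Set (Finset Ω)) (mv : Ω → Ω → Equiv.Perm Ω) : Prop :=
  (∀ a, mv a a = 1) ∧
  ∀ a b : Ω, a ≠ b →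
    mv a b a = b ∧ mv a b b = a ∧
    (∀ x y : Ω, ({a, b, x, y} : Finset Ω) ∈ B → mv a b x = y) ∧
    (∀ x : Ω, x ≠ a → x ≠ b → (∀ L ∈ B, ¬(a ∈ L ∧ b ∈ L ∧ x ∈ L)) → mv a b x = x)

/-- The move sequence `[a, b₁, …, b_k] = [a,b₁][b₁,b₂]⋯[b_{k-1},b_k]`; the factors are
applied left-to-right (so in Lean's convention the product is reversed). -/
def moveSeq (mv : Ω → Ω → Equiv.Perm Ω) : Ω → List Ω → Equiv.Perm Ω
  | _, [] => 1
  | a, b :: l => moveSeq mv b l * mv a b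

/-- The Conway groupoid `L_x(D)`: all move sequences starting at `x`. -/
def ConwayGroupoid (mv : Ω → Ω → Equiv.Perm Ω) (x : Ω) : Set (Equiv.Perm Ω) :=
  { g | ∃ l : List Ω, g = moveSeq mv x l }

/-- The hole stabilizer `π_x(D)`: all move sequences starting and ending at `x`. -/
def holeStabilizer (mv : Ω → Ω → Equiv.Perm Ω) (x : Ω) : Set (Equiv.Perm Ω) :=
  { g | ∃ l : List Ω, g = moveSeq mv x (l ++ [x]) }

/-- `L(D)`: the set of all move sequences. -/
def allMoveSeqs (mv : Ω → Ω → Equiv.Perm Ω) : Set (Equiv.Perm Ω) :=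
  { g | ∃ (a : Ω) (l : List Ω), g = moveSeq mv a l }

/-- The set `E` of elementary moves `[a,b]` with `a ≠ b`. -/
def elemMoves (mv : Ω → Ω → Equiv.Perm Ω) : Set (Equiv.Perm Ω) :=
  { g | ∃ a b : Ω, a ≠ b ∧ g = mv a b }

/-- `\overline{x,y}`: the set of points lying on a common line with `x` and `y`. -/
def lineJoin (B : Set (Finset Ω)) (x y : Ω) : Set Ω :=
  { z | ∃ L ∈ B, x ∈ L ∧ y ∈ L ∧ z ∈ L }

/-- A set `G` of permutations is transitive on `S`. -/
def SetTransitiveOn (G : Set (Equiv.Perm Ω)) (S : Set Ω) : Prop :=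
  ∀ x ∈ S, ∀ y ∈ S, ∃ g ∈ G, g x = y

/-- `Δ` is a block for the set `G` of permutations. -/
def SetIsBlock (G : Set (Equiv.Perm Ω)) (Δ : Set Ω) : Prop :=
  ∀ g ∈ G, (⇑g) '' Δ = Δ ∨ Disjoint ((⇑g) '' Δ) Δ

/-- A set `G` of permutations is primitive on `S`: it is transitive on `S` and every
block contained in `S` is trivial (equivalently, the only invariant partitions are the
partition into singletons and the one-part partition). -/
def SetPrimitiveOn (G : Set (Equiv.Perm Ω)) (S : Set Ω) : Prop :=
  SetTransitiveOn G S ∧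
  ∀ Δ : Set Ω, Δ ⊆ S → SetIsBlock G Δ → Δ.Subsingleton ∨ Δ = S

/-- Primitivity on all of `Ω`. -/
def SetPrimitive (G : Set (Equiv.Perm Ω)) : Prop :=
  SetPrimitiveOn G Set.univ

/-- `(G, E)` is a 3-transposition group: `G` is the group generated by `E`, `E` is a
union of `G`-conjugacy classes of involutions, and any product of two members of `E`
has order 1, 2 or 3. -/
def Is3TranspositionGroup (G E : Set (Equiv.Perm Ω)) : Prop :=
  ((Subgroup.closure E : Subgroup (Equiv.Perm Ω)) : Set (Equiv.Perm Ω)) = G ∧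
  (∀ e ∈ E, orderOf e = 2) ∧
  (∀ g ∈ G, ∀ e ∈ E, g * e * g⁻¹ ∈ E) ∧
  (∀ g ∈ E, ∀ h ∈ E, orderOf (g * h) = 1 ∨ orderOf (g * h) = 2 ∨ orderOf (g * h) = 3)

/-- Two designs are isomorphic: a bijection of the point sets carrying lines to lines. -/
def DesignIso {Ω₁ Ω₂ : Type*} (B₁ : Set (Finset Ω₁)) (B₂ : Set (Finset Ω₂)) : Prop :=
  ∃ e : Ω₁ ≃ Ω₂, ∀ L : Finset Ω₁, L ∈ B₁ ↔ L.map e.toEmbedding ∈ B₂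

/-- The lines of the Boolean quadruple system of order `2^m`: 4-subsets of `F_2^m`
summing to zero. -/
def booleanLines (m : ℕ) : Set (Finset (Fin m → ZMod 2)) :=
  { L | L.card = 4 ∧ ∑ v ∈ L, v = 0 }

/-- `V = F_2^{2m}`, with coordinates indexed by `Fin m ⊕ Fin m`. -/
abbrev Vsp (m : ℕ) := (Fin m ⊕ Fin m) → ZMod 2

/-- `θ(u) = u e uᵀ` where `e` is the block matrix `(0 I; 0 0)`. -/
def theta {m : ℕ} (u : Vsp m) : ZMod 2 :=
  ∑ i : Fin m, u (Sum.inl i) * u (Sum.inr i)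

/-- The lines of the design `D^a`: 4-subsets of `V` summing to zero on which `θ` sums
to zero. -/
def linesA (m : ℕ) : Set (Finset (Vsp m)) :=
  { L | L.card = 4 ∧ ∑ v ∈ L, v = 0 ∧ ∑ v ∈ L, theta v = 0 }

/-- The lines of the design `D^ε`: 4-subsets of `{v ∈ V : θ(v) = ε}` summing to zero. -/
def linesEps (m : ℕ) (ε : ZMod 2) : Set (Finset {v : Vsp m // theta v = ε}) :=
  { L | L.card = 4 ∧ ∑ v ∈ L, (v : Vsp m) = 0 }

/-- The derived graph `G_{D,∞}`: vertices are the points other than `∞`, with `a, b`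
adjacent iff `{∞,a,b}` is a collinear triple. -/
def derivedGraph [DecidableEq Ω] (B : Set (Finset Ω)) (inf : Ω) :
    SimpleGraph {x : Ω // x ≠ inf} where
  Adj a b := a ≠ b ∧ ({inf, (a : Ω), (b : Ω)} : Finset Ω) ∈ collinearTriples B
  symm := by
    constructor
    rintro a b ⟨hab, h⟩
    exact ⟨hab.symm, by rwa [Finset.pair_comm (b : Ω) (a : Ω)]⟩
  loopless := by constructor; rintro a ⟨h, -⟩; exact h rfl

/-- `w` witnesses the triangle property for the edge `{u,v}`: `w` is a common neighbour
of `u` and `v`, and every other vertex is adjacent to exactly one or three of `u,v,w`. -/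
def TriangleWitness {V : Type*} (G : SimpleGraph V) (u v w : V) : Prop :=
  G.Adj u w ∧ G.Adj v w ∧
  ∀ x : V, x ∉ ({u, v, w} : Set V) →
    ({y ∈ ({u, v, w} : Set V) | G.Adj x y}.ncard = 1 ∨
     {y ∈ ({u, v, w} : Set V) | G.Adj x y}.ncard = 3)

/-- The triangle property for a graph. -/
def HasTriangleProperty {V : Type*} (G : SimpleGraph V) : Prop :=
  (∃ u v, G.Adj u v) ∧ ∀ u v : V, G.Adj u v → ∃ w, TriangleWitness G u v w

/-- The strong triangle property: each edge has a unique triangle-property witness. -/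
def HasStrongTriangleProperty {V : Type*} (G : SimpleGraph V) : Prop :=
  (∃ u v, G.Adj u v) ∧ ∀ u v : V, G.Adj u v → ∃! w, TriangleWitness G u v w

/-- A coherent 4-subset: all four of its 3-element subsets lie in `C`. -/
def IsCoherent (C : Set (Finset Ω)) (q : Finset Ω) : Prop :=
  q.card = 4 ∧ ∀ t ⊆ q, t.card = 3 → t ∈ C

/-!
For a point `p` off `{x, y, z}`, the two-graph condition on `{x, y, z, p}` says that `p` is
collinear with an even number of the pairs `{x, y}`, `{y, z}`, `{z, x}` when `x, y, z` are not
collinear, and with an odd number when they are. In each admissible case, (△) and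
supersimplicity pin down the fourth points of the lines through `p`, and one finds:

* if `x, y, z` are not collinear, every point is either fixed by `[x,y]`, `[y,z]`, `[z,x]` or
  lies in a triple on which these act as the transpositions `(a b)`, `(b c)`, `(c a)` of `Sym 3`,
  so the relations `(b c)(a b)(c a) = (a b)` and `((a b)(b c))³ = 1` of `Sym 3` carry over;
* if `{x, y, z, w}` is a line, `[x,y]` and `[y,z]` commute, so their product is an involution.
-/

open Finset

section Lines

variable {Ω : Type*} {B : Set (Finset Ω)} {a b c d p q r : Ω}

theorem mem_lineJoin_comm : p ∈ lineJoin B a b ↔ p ∈ lineJoin B b a :=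
  ⟨fun ⟨L, hL, ha, hb, hp⟩ => ⟨L, hL, hb, ha, hp⟩, fun ⟨L, hL, hb, ha, hp⟩ => ⟨L, hL, ha, hb, hp⟩⟩

theorem mem_lineJoin_rotate : p ∈ lineJoin B a b ↔ a ∈ lineJoin B b p :=
  ⟨fun ⟨L, hL, ha, hb, hp⟩ => ⟨L, hL, hb, hp, ha⟩, fun ⟨L, hL, hb, hp, ha⟩ => ⟨L, hL, ha, hb, hp⟩⟩

variable [DecidableEq Ω]

theorem ne_of_card_eq_four (h : #({a, b, c, d} : Finset Ω) = 4) :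
    a ≠ b ∧ a ≠ c ∧ a ≠ d ∧ b ≠ c ∧ b ≠ d ∧ c ≠ d := by
  refine ⟨?_, ?_, ?_, ?_, ?_, ?_⟩ <;> rintro rfl <;>
    simp only [mem_insert, mem_singleton, true_or, or_true, insert_eq_of_mem] at h <;>
    grind [card_le_three]

theorem exists_mem_of_mem_lineJoin (h4 : ∀ L ∈ B, #L = 4) (hab : a ≠ b) (hpa : p ≠ a)
    (hpb : p ≠ b) (h : p ∈ lineJoin B a b) : ∃ q, {a, b, p, q} ∈ B := by
  obtain ⟨L, hL, ha, hb, hp⟩ := h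
  have hlt : #({a, b, p} : Finset Ω) < #L := by
    rw [h4 L hL]; exact lt_of_le_of_lt card_le_three (by norm_num)
  obtain ⟨q, hqL, hq⟩ := exists_mem_notMem_of_card_lt_card hlt
  simp only [mem_insert, mem_singleton, not_or] at hq
  have hsub : ({a, b, p, q} : Finset Ω) ⊆ L := by simp [insert_subset_iff, *]
  refine ⟨q, eq_of_subset_of_card_le hsub ?_ ▸ hL⟩
  rw [h4 L hL, card_eq_four.mpr ⟨a, b, p, q, by grind⟩]

theorem Supersimple.fourth_unique (hss : Supersimple B) (h4 : ∀ L ∈ B, #L = 4)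
    (h1 : {a, b, c, d} ∈ B) (h2 : {a, b, c, q} ∈ B) : d = q := by
  obtain ⟨hab, hac, -, hbc, -, -⟩ := ne_of_card_eq_four (h4 _ h1)
  obtain ⟨-, -, haq, -, hbq, hcq⟩ := ne_of_card_eq_four (h4 _ h2)
  have heq : ({a, b, c, d} : Finset Ω) = {a, b, c, q} := by
    by_contra hne
    have hsub : ({a, b, c} : Finset Ω) ⊆ {a, b, c, d} ∩ {a, b, c, q} := by
      simp [insert_subset_iff]
    have := card_le_card hsub
    rw [card_eq_three.mpr ⟨a, b, c, hab, hac, hbc, rfl⟩] at this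
    have := hss _ h1 _ h2 hne
    omega
  have hq : q ∈ ({a, b, c, d} : Finset Ω) := heq ▸ by simp
  simp only [mem_insert, mem_singleton] at hq
  grind

theorem SymmDiffCond.symmDiff_mem (hsd : SymmDiffCond B) (hss : Supersimple B)
    (h4 : ∀ L ∈ B, #L = 4) (h1 : {a, b, p, q} ∈ B) (h2 : {a, c, p, r} ∈ B)
    (hbc : b ≠ c) (hqc : q ≠ c) : {b, c, q, r} ∈ B := by
  obtain ⟨hab, hap, haq, hbp, hbq, hpq⟩ := ne_of_card_eq_four (h4 _ h1)
  obtain ⟨hac, -, har, hcp, hcr, hpr⟩ := ne_of_card_eq_four (h4 _ h2)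
  have hqr : q ≠ r := by
    rintro rfl
    exact hbc (hss.fourth_unique (a := a) (b := p) (c := q) h4
      (by simpa only [← insert_empty, insert_comm] using h1)
      (by simpa only [← insert_empty, insert_comm] using h2))
  have hbr : b ≠ r := by
    rintro rfl
    exact hqc (hss.fourth_unique h4 h1 (by simpa only [← insert_empty, insert_comm] using h2))
  have hinter : ({a, b, p, q} ∩ {a, c, p, r} : Finset Ω) = {a, p} := by
    ext; simp only [mem_inter, mem_insert, mem_singleton]; grind
  have hsymm : symmDiff ({a, b, p, q} : Finset Ω) {a, c, p, r} = {b, c, q, r} := by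
    ext; simp only [mem_symmDiff, mem_insert, mem_singleton]; grind
  exact hsymm ▸ hsd _ h1 _ h2 (by rw [hinter, card_pair hap])

theorem mem_collinearTriples_iff (hab : a ≠ b) (hac : a ≠ c) (hbc : b ≠ c) :
    {a, b, c} ∈ collinearTriples B ↔ c ∈ lineJoin B a b := by
  simp [collinearTriples, lineJoin, insert_subset_iff,
    card_eq_three.mpr ⟨a, b, c, hab, hac, hbc, rfl⟩]

theorem ncard_subset_eq_card_filter_erase {C : Set (Finset Ω)} [DecidablePred (· ∈ C)]
    {s : Finset Ω} (hC : ∀ t ∈ C, #t + 1 = #s) :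
    {t ∈ C | t ⊆ s}.ncard = #{u ∈ s | s.erase u ∈ C} := by
  have hset : {t ∈ C | t ⊆ s} = ((s.filter (s.erase · ∈ C)).image s.erase : Set (Finset Ω)) := by
    ext t
    simp only [Set.mem_ofPred_eq, coe_image, coe_filter, Set.mem_image]
    constructor
    · rintro ⟨htC, hts⟩
      have hcard := hC t htC
      obtain ⟨u, hus, hut⟩ := exists_mem_notMem_of_card_lt_card (s := t) (t := s) (by omega)
      have htu : t = s.erase u := eq_of_subset_of_card_le (subset_erase.mpr ⟨hts, hut⟩)
        (by rw [card_erase_of_mem hus]; omega)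
      exact ⟨u, ⟨hus, htu ▸ htC⟩, htu.symm⟩
    · rintro ⟨u, ⟨hus, huC⟩, rfl⟩
      exact ⟨huC, erase_subset u s⟩
  rw [hset, Set.ncard_coe_finset, card_image_of_injOn ((erase_injOn s).mono (filter_subset _ _))]

-- An even number of the four triples in `{a, b, c, d}` are collinear.
theorem IsRegularTwoGraph.lineJoin_parity (hRT : IsRegularTwoGraph (collinearTriples B))
    (hab : a ≠ b) (hac : a ≠ c) (had : a ≠ d) (hbc : b ≠ c) (hbd : b ≠ d) (hcd : c ≠ d) :
    c ∈ lineJoin B a b ↔ (d ∈ lineJoin B a b ↔ (d ∈ lineJoin B b c ↔ d ∈ lineJoin B c a)) := by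
  classical
  have hcard : #({a, b, c, d} : Finset Ω) = 4 :=
    card_eq_four.mpr ⟨a, b, c, d, hab, hac, had, hbc, hbd, hcd, rfl⟩
  have key := hRT.2.2 _ hcard
  rw [ncard_subset_eq_card_filter_erase fun t ht => by rw [hRT.1 t ht, hcard], card_filter,
    sum_insert (by simp [*]), sum_insert (by simp [*]), sum_insert (by simp [*]),
    sum_singleton] at key
  simp only [erase_insert_of_ne, erase_insert_eq_erase, erase_singleton, erase_eq_of_notMem,
    ne_eq, not_false_eq_true, mem_insert, mem_singleton, or_self, insert_empty,
    mem_collinearTriples_iff, *] at key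
  rw [mem_lineJoin_comm (a := c)]
  by_cases h1 : c ∈ lineJoin B a b <;> by_cases h2 : d ∈ lineJoin B a b <;>
    by_cases h3 : d ∈ lineJoin B b c <;> by_cases h4 : d ∈ lineJoin B a c <;>
    simp [h1, h2, h3, h4] at key ⊢

end Lines

section Sym3

variable {Ω : Type*}

structure ActsAsSym3 (s t u : Perm Ω) (a b c : Ω) : Prop where
  s_a : s a = b
  s_b : s b = a
  s_c : s c = c
  t_b : t b = c
  t_c : t c = b
  t_a : t a = a
  u_c : u c = a
  u_a : u a = c
  u_b : u b = b

theorem ActsAsSym3.rotate {s t u : Perm Ω} {a b c : Ω} (h : ActsAsSym3 s t u a b c) :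
    ActsAsSym3 t u s b c a :=
  ⟨h.t_b, h.t_c, h.t_a, h.u_c, h.u_a, h.u_b, h.s_a, h.s_b, h.s_c⟩

theorem mul_mul_eq_and_pow_three_eq_one {s t u : Perm Ω}
    (h : ∀ p, (s p = p ∧ t p = p ∧ u p = p) ∨
      ∃ a b c, ActsAsSym3 s t u a b c ∧ (p = a ∨ p = b ∨ p = c)) :
    t * s * u = s ∧ (s * t) ^ 3 = 1 := by
  have key : ∀ p, (t * s * u) p = s p ∧ ((s * t) ^ 3) p = p := by
    intro p
    obtain ⟨hs, ht, hu⟩ | ⟨a, b, c, h, rfl | rfl | rfl⟩ := h p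
    · simp [pow_succ, hs, ht, hu]
    all_goals simp [pow_succ, h.s_a, h.s_b, h.s_c, h.t_a, h.t_b, h.t_c, h.u_a, h.u_b, h.u_c]
  exact ⟨Equiv.ext fun p => (key p).1, Equiv.ext fun p => (key p).2⟩

end Sym3

section Moves

variable {Ω : Type*} [DecidableEq Ω] {B : Set (Finset Ω)} {mv : Ω → Ω → Perm Ω}
  {a b c p q r x y z w : Ω}

namespace IsElemMoveFn

theorem apply_left (hmv : IsElemMoveFn B mv) (hab : a ≠ b) : mv a b a = b := (hmv.2 a b hab).1

theorem apply_right (hmv : IsElemMoveFn B mv) (hab : a ≠ b) : mv a b b = a := (hmv.2 a b hab).2.1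

theorem apply_of_mem (hmv : IsElemMoveFn B mv) (h4 : ∀ L ∈ B, #L = 4) (h : {a, b, p, q} ∈ B) :
    mv a b p = q :=
  (hmv.2 a b (ne_of_card_eq_four (h4 _ h)).1).2.2.1 p q h

theorem apply_of_notMem (hmv : IsElemMoveFn B mv) (hpa : p ≠ a) (hpb : p ≠ b)
    (hp : p ∉ lineJoin B a b) : mv a b p = p := by
  rcases eq_or_ne a b with rfl | hab
  · rw [hmv.1]; rfl
  exact (hmv.2 a b hab).2.2.2 p hpa hpb fun L hL h => hp ⟨L, hL, h⟩

theorem comm (hmv : IsElemMoveFn B mv) (h4 : ∀ L ∈ B, #L = 4) (a b : Ω) : mv a b = mv b a := by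
  rcases eq_or_ne a b with rfl | hab
  · rfl
  ext p
  by_cases hpa : p = a
  · rw [hpa, hmv.apply_left hab, hmv.apply_right hab.symm]
  by_cases hpb : p = b
  · rw [hpb, hmv.apply_right hab, hmv.apply_left hab.symm]
  by_cases hp : p ∈ lineJoin B a b
  · obtain ⟨q, hq⟩ := exists_mem_of_mem_lineJoin h4 hab hpa hpb hp
    have hq' : ({b, a, p, q} : Finset Ω) ∈ B := by
      simpa only [← insert_empty, insert_comm] using hq
    rw [hmv.apply_of_mem h4 hq, hmv.apply_of_mem h4 hq']
  · rw [hmv.apply_of_notMem hpa hpb hp,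
      hmv.apply_of_notMem hpb hpa (mem_lineJoin_comm.not.mp hp)]

theorem mul_self (hmv : IsElemMoveFn B mv) (h4 : ∀ L ∈ B, #L = 4) (a b : Ω) :
    mv a b * mv a b = 1 := by
  rcases eq_or_ne a b with rfl | hab
  · rw [hmv.1, one_mul]
  ext p
  simp only [Perm.mul_apply, Perm.one_apply]
  by_cases hpa : p = a
  · rw [hpa, hmv.apply_left hab, hmv.apply_right hab]
  by_cases hpb : p = b
  · rw [hpb, hmv.apply_right hab, hmv.apply_left hab]
  by_cases hp : p ∈ lineJoin B a b
  · obtain ⟨q, hq⟩ := exists_mem_of_mem_lineJoin h4 hab hpa hpb hp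
    have hq' : ({a, b, q, p} : Finset Ω) ∈ B := by
      simpa only [← insert_empty, insert_comm] using hq
    rw [hmv.apply_of_mem h4 hq, hmv.apply_of_mem h4 hq']
  · rw [hmv.apply_of_notMem hpa hpb hp, hmv.apply_of_notMem hpa hpb hp]

theorem apply_eq_self_of_notMem_lineJoin (hmv : IsElemMoveFn B mv) (h4 : ∀ L ∈ B, #L = 4)
    (hss : Supersimple B) (hsd : SymmDiffCond B) (h : {a, c, p, r} ∈ B) (hbc : b ≠ c)
    (hbp : b ≠ p) (hp : p ∉ lineJoin B b c) : mv a b r = r := by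
  rcases eq_or_ne a b with rfl | hab
  · rw [hmv.1]; rfl
  obtain ⟨-, -, har, -, -, -⟩ := ne_of_card_eq_four (h4 _ h)
  have hrb : r ≠ b := by rintro rfl; exact hp ⟨_, h, by simp, by simp, by simp⟩
  refine hmv.apply_of_notMem har.symm hrb fun hr => ?_
  obtain ⟨s, hs⟩ := exists_mem_of_mem_lineJoin h4 hab har.symm hrb hr
  have h' : ({a, c, r, p} : Finset Ω) ∈ B := by simpa only [← insert_empty, insert_comm] using h
  have hsc : s ≠ c := by
    rintro rfl
    exact hbp (hss.fourth_unique h4 (by simpa only [← insert_empty, insert_comm] using hs) h')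
  exact hp ⟨_, hsd.symmDiff_mem hss h4 hs h' hbc hsc, by simp, by simp, by simp⟩

theorem actsAsSym3_of_mem_lineJoin (hmv : IsElemMoveFn B mv) (h4 : ∀ L ∈ B, #L = 4)
    (hss : Supersimple B) (hsd : SymmDiffCond B) (hxy : x ≠ y) (hyz : y ≠ z) (hxz : x ≠ z)
    (hx : x ∉ lineJoin B y z) (hpx : p ≠ x) (hpy : p ≠ y) (hpz : p ≠ z)
    (hpxy : p ∈ lineJoin B x y) (hpzx : p ∈ lineJoin B z x) (hpyz : p ∉ lineJoin B y z) :
    ∃ q r, ActsAsSym3 (mv x y) (mv y z) (mv z x) p q r := by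
  obtain ⟨q, hq⟩ := exists_mem_of_mem_lineJoin h4 hxy hpx hpy hpxy
  obtain ⟨r, hr⟩ := exists_mem_of_mem_lineJoin h4 hxz hpx hpz (mem_lineJoin_comm.mp hpzx)
  have hqz : q ≠ z := by rintro rfl; exact hx ⟨_, hq, by simp, by simp, by simp⟩
  have hqr := hsd.symmDiff_mem hss h4 hq hr hyz hqz
  refine ⟨q, r, ⟨hmv.apply_of_mem h4 hq,
    hmv.apply_of_mem h4 (by simpa only [← insert_empty, insert_comm] using hq),
    hmv.apply_eq_self_of_notMem_lineJoin h4 hss hsd hr hyz hpy.symm hpyz,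
    hmv.apply_of_mem h4 hqr,
    hmv.apply_of_mem h4 (by simpa only [← insert_empty, insert_comm] using hqr),
    hmv.apply_of_notMem hpy hpz hpyz,
    hmv.apply_of_mem h4 (by simpa only [← insert_empty, insert_comm] using hr),
    hmv.apply_of_mem h4 (by simpa only [← insert_empty, insert_comm] using hr), ?_⟩⟩
  rw [hmv.comm h4]
  exact hmv.apply_eq_self_of_notMem_lineJoin h4 hss hsd hq hyz.symm hpz.symm
    (mem_lineJoin_comm.not.mp hpyz)

theorem fixed_or_actsAsSym3 (hmv : IsElemMoveFn B mv) (h4 : ∀ L ∈ B, #L = 4)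
    (hss : Supersimple B) (hsd : SymmDiffCond B) (hRT : IsRegularTwoGraph (collinearTriples B))
    (hxy : x ≠ y) (hyz : y ≠ z) (hxz : x ≠ z) (hx : x ∉ lineJoin B y z) (p : Ω) :
    (mv x y p = p ∧ mv y z p = p ∧ mv z x p = p) ∨
      ∃ a b c, ActsAsSym3 (mv x y) (mv y z) (mv z x) a b c ∧ (p = a ∨ p = b ∨ p = c) := by
  have hy : y ∉ lineJoin B z x := mem_lineJoin_rotate.not.mp hx
  have hz : z ∉ lineJoin B x y := mem_lineJoin_rotate.not.mp hy
  by_cases hp : p = x ∨ p = y ∨ p = z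
  · refine .inr ⟨x, y, z, ⟨hmv.apply_left hxy, hmv.apply_right hxy,
      hmv.apply_of_notMem hxz.symm hyz.symm hz, hmv.apply_left hyz, hmv.apply_right hyz,
      hmv.apply_of_notMem hxy hxz hx, hmv.apply_left hxz.symm, hmv.apply_right hxz.symm,
      hmv.apply_of_notMem hyz hxy.symm hy⟩, hp⟩
  obtain ⟨hpx, hpy, hpz⟩ : p ≠ x ∧ p ≠ y ∧ p ≠ z := by simpa only [not_or] using hp
  have hpar := hRT.lineJoin_parity hxy hxz hpx.symm hyz hpy.symm hpz.symm
  have hcases : (p ∉ lineJoin B x y ∧ p ∉ lineJoin B y z ∧ p ∉ lineJoin B z x) ∨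
      (p ∈ lineJoin B x y ∧ p ∉ lineJoin B y z ∧ p ∈ lineJoin B z x) ∨
      (p ∈ lineJoin B x y ∧ p ∈ lineJoin B y z ∧ p ∉ lineJoin B z x) ∨
      (p ∉ lineJoin B x y ∧ p ∈ lineJoin B y z ∧ p ∈ lineJoin B z x) := by
    tauto
  rcases hcases with ⟨h1, h2, h3⟩ | ⟨h1, h2, h3⟩ | ⟨h1, h2, h3⟩ | ⟨h1, h2, h3⟩
  · exact .inl ⟨hmv.apply_of_notMem hpx hpy h1, hmv.apply_of_notMem hpy hpz h2,
      hmv.apply_of_notMem hpz hpx h3⟩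
  · obtain ⟨q, r, h⟩ :=
      hmv.actsAsSym3_of_mem_lineJoin h4 hss hsd hxy hyz hxz hx hpx hpy hpz h1 h3 h2
    exact .inr ⟨p, q, r, h, by simp⟩
  · obtain ⟨q, r, h⟩ :=
      hmv.actsAsSym3_of_mem_lineJoin h4 hss hsd hyz hxz.symm hxy.symm hy hpy hpz hpx h2 h1 h3
    exact .inr ⟨r, p, q, h.rotate.rotate, by simp⟩
  · obtain ⟨q, r, h⟩ :=
      hmv.actsAsSym3_of_mem_lineJoin h4 hss hsd hxz.symm hxy hyz.symm hz hpz hpx hpy h3 h2 h1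
    exact .inr ⟨q, r, p, h.rotate, by simp⟩

theorem commute_of_mem (hmv : IsElemMoveFn B mv) (h4 : ∀ L ∈ B, #L = 4)
    (hss : Supersimple B) (hsd : SymmDiffCond B) (hRT : IsRegularTwoGraph (collinearTriples B))
    (hL : {x, y, z, w} ∈ B) : Commute (mv x y) (mv y z) := by
  obtain ⟨hxy, hxz, hxw, hyz, hyw, hzw⟩ := ne_of_card_eq_four (h4 _ hL)
  refine Equiv.ext fun p => ?_
  simp only [Perm.mul_apply]
  by_cases hp : p = x ∨ p = y ∨ p = z ∨ p = w
  · have hsz : mv x y z = w := hmv.apply_of_mem h4 hL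
    have hsw : mv x y w = z :=
      hmv.apply_of_mem h4 (by simpa only [← insert_empty, insert_comm] using hL)
    have htx : mv y z x = w :=
      hmv.apply_of_mem h4 (by simpa only [← insert_empty, insert_comm] using hL)
    have htw : mv y z w = x :=
      hmv.apply_of_mem h4 (by simpa only [← insert_empty, insert_comm] using hL)
    rcases hp with rfl | rfl | rfl | rfl <;>
      simp only [hmv.apply_left hxy, hmv.apply_right hxy, hmv.apply_left hyz, hmv.apply_right hyz,
        hsz, hsw, htx, htw]
  obtain ⟨hpx, hpy, hpz, hpw⟩ : p ≠ x ∧ p ≠ y ∧ p ≠ z ∧ p ≠ w := by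
    simpa only [not_or] using hp
  have hpar := hRT.lineJoin_parity hxy hxz hpx.symm hyz hpy.symm hpz.symm
  have hz : z ∈ lineJoin B x y := ⟨_, hL, by simp, by simp, by simp⟩
  have hcases : (p ∈ lineJoin B x y ∧ p ∈ lineJoin B y z ∧ p ∈ lineJoin B z x) ∨
      (p ∈ lineJoin B x y ∧ p ∉ lineJoin B y z ∧ p ∉ lineJoin B z x) ∨
      (p ∉ lineJoin B x y ∧ p ∈ lineJoin B y z ∧ p ∉ lineJoin B z x) ∨
      (p ∉ lineJoin B x y ∧ p ∉ lineJoin B y z ∧ p ∈ lineJoin B z x) := by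
    tauto
  rcases hcases with ⟨h1, h2, h3⟩ | ⟨h1, h2, h3⟩ | ⟨h1, h2, h3⟩ | ⟨h1, h2, h3⟩
  · obtain ⟨q, hq⟩ := exists_mem_of_mem_lineJoin h4 hxy hpx hpy h1
    obtain ⟨t, ht⟩ := exists_mem_of_mem_lineJoin h4 hyz hpy hpz h2
    obtain ⟨r, hr⟩ := exists_mem_of_mem_lineJoin h4 hxz hpx hpz (mem_lineJoin_comm.mp h3)
    have hqz : q ≠ z := by
      rintro rfl
      exact hpw (hss.fourth_unique h4 (by simpa only [← insert_empty, insert_comm] using hq) hL)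
    have htx : t ≠ x := by
      rintro rfl
      exact hpw (hss.fourth_unique h4 (by simpa only [← insert_empty, insert_comm] using ht) hL)
    have hyzqr := hsd.symmDiff_mem hss h4 hq hr hyz hqz
    have hyxtr := hsd.symmDiff_mem hss h4 (a := z) (p := p)
      (by simpa only [← insert_empty, insert_comm] using ht)
      (by simpa only [← insert_empty, insert_comm] using hr) hxy.symm htx
    rw [hmv.apply_of_mem h4 ht, hmv.apply_of_mem h4 hq, hmv.apply_of_mem h4 hyzqr,
      hmv.comm h4 x y, hmv.apply_of_mem h4 hyxtr]
  · obtain ⟨q, hq⟩ := exists_mem_of_mem_lineJoin h4 hxy hpx hpy h1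
    rw [hmv.apply_of_notMem hpy hpz h2, hmv.apply_of_mem h4 hq,
      hmv.apply_eq_self_of_notMem_lineJoin h4 hss hsd
        (by simpa only [← insert_empty, insert_comm] using hq) hxz.symm hpz.symm h3]
  · obtain ⟨q, hq⟩ := exists_mem_of_mem_lineJoin h4 hyz hpy hpz h2
    rw [hmv.apply_of_notMem hpx hpy h1, hmv.apply_of_mem h4 hq, hmv.comm h4 x y,
      hmv.apply_eq_self_of_notMem_lineJoin h4 hss hsd hq hxz hpx.symm
        (mem_lineJoin_comm.not.mp h3)]
  · simp only [hmv.apply_of_notMem hpx hpy h1, hmv.apply_of_notMem hpy hpz h2]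

end IsElemMoveFn

end Moves

/-- Lemma 4.5 (a),(b): under Hypotheses 4.1, for pairwise distinct
`x,y,z`: the order of `[x,y][y,z]` is 2 if `x ∈ \overline{y,z}` and 3 otherwise; and
if `x ∉ \overline{y,z}` then `[z,x][x,y][y,z] = [x,y]` (factors applied left to
right). -/
theorem elemMove_product_order [Fintype Ω] [DecidableEq Ω]
    {B : Set (Finset Ω)} {n lam : ℕ}
    (hD : IsDesign B n lam) (hss : Supersimple B) (hsd : SymmDiffCond B)
    (hRT : IsRegularTwoGraph (collinearTriples B))
    (mv : Ω → Ω → Equiv.Perm Ω) (hmv : IsElemMoveFn B mv)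
    (x y z : Ω) (hxy : x ≠ y) (hyz : y ≠ z) (hxz : x ≠ z) :
    (x ∈ lineJoin B y z → orderOf (mv x y * mv y z) = 2) ∧
    (x ∉ lineJoin B y z → orderOf (mv x y * mv y z) = 3) ∧
    (x ∉ lineJoin B y z → mv y z * mv x y * mv z x = mv x y) := by
  have h4 := hD.2.1
  have hne : mv x y * mv y z ≠ 1 := fun h => hxz <| by
    simpa [hmv.apply_right hxy, hmv.apply_right hyz] using congr($h z)
  refine ⟨fun hx => orderOf_eq_prime ?_ hne, fun hx => orderOf_eq_prime ?_ hne, fun hx => ?_⟩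
  · obtain ⟨w, hL⟩ := exists_mem_of_mem_lineJoin h4 hyz hxy hxz hx
    have hL' : ({x, y, z, w} : Finset Ω) ∈ B := by
      simpa only [← insert_empty, insert_comm] using hL
    rw [(hmv.commute_of_mem h4 hss hsd hRT hL').mul_pow, sq, sq, hmv.mul_self h4,
      hmv.mul_self h4, one_mul]
  · exact (mul_mul_eq_and_pow_three_eq_one
      (hmv.fixed_or_actsAsSym3 h4 hss hsd hRT hxy hyz hxz hx)).2
  · exact (mul_mul_eq_and_pow_three_eq_one
      (hmv.fixed_or_actsAsSym3 h4 hss hsd hRT hxy hyz hxz hx)).1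
end

section
/- Let D1=(Ω1,B1) and D2=(Ω2,B2) be two designs, each a supersimple 2-(n_i,4,λ_i) design satisfying (△) whose collinear triples form a regular two-graph on its point set, and with n_i > 2λ_i + 2 (i = 1,2). Let ∞1 ∈ Ω1 and ∞2 ∈ Ω2. If the derived graphs G_{D1,∞1} and G_{D2,∞2} are isomorphic as graphs, then D1 and D2 are isomorphic as designs. -/
open Equiv

variable {Ω : Type*}

/-!
Extend the isomorphism of derived graphs to a bijection `φ` with `φ ∞₁ = ∞₂`. Every quadruple
contains an even number of collinear triples, so the triples through `∞` determine all
collinear triples and `φ` preserves collinearity. Lines are determined by collinear triples: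
by supersimplicity and (△) the fourth point `d` of the line through `p, b, c` witnesses the
triangle property of the edge `b c` in the graph derived at `p`, and this witness is unique,
since two witnesses `w ≠ w'` would be collinear with every other point, which `n > 2λ + 2`
rules out.
-/

open Finset

section TwoGraph
variable {α : Type*} [DecidableEq α]

lemma eq_triple_of_subset_quadruple {a b c d : α} {t : Finset α} (ht : t.card = 3)
    (hq : t ⊆ {a, b, c, d}) :
    t = {a, b, c} ∨ t = {a, b, d} ∨ t = {a, c, d} ∨ t = {b, c, d} := by
  obtain ⟨x, y, z, hxy, hxz, hyz, rfl⟩ := card_eq_three.mp ht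
  simp only [insert_subset_iff, singleton_subset_iff, mem_insert, mem_singleton] at hq
  grind [Finset.insert_comm, Finset.pair_comm]

/-- The number of triples of `C` inside `{a, b, c, d}` is even. -/
lemma IsRegularTwoGraph.parity {C : Set (Finset α)} (hC : IsRegularTwoGraph C)
    {a b c d : α} (hab : a ≠ b) (hac : a ≠ c) (had : a ≠ d)
    (hbc : b ≠ c) (hbd : b ≠ d) (hcd : c ≠ d) :
    (({a, b, c} ∈ C ↔ {a, b, d} ∈ C) ↔ ({a, c, d} ∈ C ↔ {b, c, d} ∈ C)) := by
  classical
  have hsub : {t ∈ C | t ⊆ {a, b, c, d}} =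
      ↑(({{a, b, c}, {a, b, d}, {a, c, d}, {b, c, d}} : Finset (Finset α)).filter (· ∈ C)) := by
    ext t
    simp only [Set.mem_ofPred_eq, coe_filter, mem_insert, mem_singleton]
    constructor
    · exact fun ⟨htC, htq⟩ => ⟨eq_triple_of_subset_quadruple (hC.1 t htC) htq, htC⟩
    · rintro ⟨rfl | rfl | rfl | rfl, htC⟩ <;> exact ⟨htC, by grind⟩
  have heven := hC.2.2 {a, b, c, d}
    (card_eq_four.mpr ⟨a, b, c, d, hab, hac, had, hbc, hbd, hcd, rfl⟩)
  rw [hsub, Set.ncard_coe_finset] at heven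
  have h12 : ({a, b, c} : Finset α) ≠ {a, b, d} :=
    ne_of_mem_of_not_mem' (a := c) (by simp) (by grind)
  have h13 : ({a, b, c} : Finset α) ≠ {a, c, d} :=
    ne_of_mem_of_not_mem' (a := b) (by simp) (by grind)
  have h14 : ({a, b, c} : Finset α) ≠ {b, c, d} :=
    ne_of_mem_of_not_mem' (a := a) (by simp) (by grind)
  have h23 : ({a, b, d} : Finset α) ≠ {a, c, d} :=
    ne_of_mem_of_not_mem' (a := b) (by simp) (by grind)
  have h24 : ({a, b, d} : Finset α) ≠ {b, c, d} :=
    ne_of_mem_of_not_mem' (a := a) (by simp) (by grind)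
  have h34 : ({a, c, d} : Finset α) ≠ {b, c, d} :=
    ne_of_mem_of_not_mem' (a := a) (by simp) (by grind)
  by_cases p1 : ({a, b, c} : Finset α) ∈ C <;> by_cases p2 : ({a, b, d} : Finset α) ∈ C <;>
    by_cases p3 : ({a, c, d} : Finset α) ∈ C <;> by_cases p4 : ({b, c, d} : Finset α) ∈ C <;>
    simp [filter_insert, filter_singleton, p1, p2, p3, p4, h12, h13, h14, h23, h24, h34]
      at heven ⊢

lemma IsRegularTwoGraph.mem_iff_of_mem_iff_through {β : Type*} [DecidableEq β]
    {C₁ : Set (Finset α)} {C₂ : Set (Finset β)} (hC₁ : IsRegularTwoGraph C₁)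
    (hC₂ : IsRegularTwoGraph C₂) (φ : α ≃ β) (a₀ : α)
    (h : ∀ b c, b ≠ a₀ → c ≠ a₀ → b ≠ c → ({a₀, b, c} ∈ C₁ ↔ {φ a₀, φ b, φ c} ∈ C₂))
    (a b c : α) : {a, b, c} ∈ C₁ ↔ {φ a, φ b, φ c} ∈ C₂ := by
  by_cases hd : a ≠ b ∧ a ≠ c ∧ b ≠ c
  swap
  · have hd' : ¬(φ a ≠ φ b ∧ φ a ≠ φ c ∧ φ b ≠ φ c) := by simpa using hd
    exact iff_of_false (fun ht => hd (card_triple_eq_three_iff.mp (hC₁.1 _ ht)))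
      (fun ht => hd' (card_triple_eq_three_iff.mp (hC₂.1 _ ht)))
  obtain ⟨hab, hac, hbc⟩ := hd
  by_cases ha : a = a₀
  · subst ha
    exact h b c (Ne.symm hab) (Ne.symm hac) hbc
  by_cases hb : b = a₀
  · subst hb
    rw [insert_comm, insert_comm (φ a)]
    exact h a c ha (Ne.symm hbc) hac
  by_cases hc : c = a₀
  · subst hc
    rw [pair_comm, insert_comm, pair_comm (φ b), insert_comm (φ a)]
    exact h a b ha hb hab
  have h₁ := hC₁.parity (Ne.symm ha) (Ne.symm hb) (Ne.symm hc) hab hac hbc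
  have h₂ := hC₂.parity (φ.injective.ne (Ne.symm ha)) (φ.injective.ne (Ne.symm hb))
    (φ.injective.ne (Ne.symm hc)) (φ.injective.ne hab) (φ.injective.ne hac)
    (φ.injective.ne hbc)
  rw [h a b ha hb hab, h a c ha hc hac, h b c hb hc hbc] at h₁
  tauto

/-- Read in the graph derived from the two-graph `C` at `p`, this says that `w` witnesses the
triangle property (`TriangleWitness`) of the edge `b c`: the last clause says that `x` is
adjacent to an odd number of `b, c, w`. -/
def IsTriangleWitnessAt (C : Set (Finset α)) (p b c w : α) : Prop :=
  {p, b, w} ∈ C ∧ {p, c, w} ∈ C ∧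
    ∀ x, x ≠ p → x ≠ b → x ≠ c → x ≠ w → (({p, x, b} ∈ C ↔ {p, x, c} ∈ C) ↔ {p, x, w} ∈ C)

lemma isTriangleWitnessAt_map_iff {β : Type*} [DecidableEq β]
    {C₁ : Set (Finset α)} {C₂ : Set (Finset β)} (φ : α ≃ β)
    (hφ : ∀ a b c, {a, b, c} ∈ C₁ ↔ {φ a, φ b, φ c} ∈ C₂) {p b c w : α} :
    IsTriangleWitnessAt C₁ p b c w ↔ IsTriangleWitnessAt C₂ (φ p) (φ b) (φ c) (φ w) := by
  simp only [IsTriangleWitnessAt, hφ, ← φ.forall_congr_right (q := fun y => y ≠ φ p → _),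
    φ.injective.ne_iff]

end TwoGraph

section Design
variable {α : Type*} [DecidableEq α] {B : Set (Finset α)}

lemma mem_collinearTriples_of_subset {L : Finset α} (hL : L ∈ B) {a b c : α}
    (hab : a ≠ b) (hac : a ≠ c) (hbc : b ≠ c) (h : {a, b, c} ⊆ L) :
    {a, b, c} ∈ collinearTriples B :=
  ⟨card_triple_eq_three_iff.mpr ⟨hab, hac, hbc⟩, L, hL, h⟩

lemma exists_insert_mem_of_mem_collinearTriples (hB : ∀ L ∈ B, L.card = 4) {t : Finset α}
    (ht : t ∈ collinearTriples B) : ∃ d ∉ t, insert d t ∈ B := by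
  obtain ⟨ht3, L, hL, htL⟩ := ht
  obtain ⟨d, hdt, rfl⟩ := exists_eq_insert_iff.mpr ⟨htL, by rw [ht3, hB L hL]⟩
  exact ⟨d, hdt, hL⟩

/-- The line through `a, b, x` meets the line `{a, b, c, d}` exactly in `{a, b}`, so their
symmetric difference is a line through `c, d, x`. -/
lemma mem_collinearTriples_of_mem_line (hss : Supersimple B) (hsd : SymmDiffCond B)
    {a b c d x : α} (hL : {a, b, c, d} ∈ B) (hca : c ≠ a) (hcb : c ≠ b) (hda : d ≠ a)
    (hdb : d ≠ b) (hcd : c ≠ d) (hx : x ∉ ({a, b, c, d} : Finset α))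
    (habx : {a, b, x} ∈ collinearTriples B) : {c, d, x} ∈ collinearTriples B := by
  obtain ⟨habx3, M, hM, habxM⟩ := habx
  have hab : a ≠ b := (card_triple_eq_three_iff.mp habx3).1
  have hxM : x ∈ M := habxM (by simp)
  have hinter : M ∩ {a, b, c, d} = {a, b} := by
    refine (eq_of_subset_of_card_le (subset_inter (fun y hy => habxM ?_) ?_) ?_).symm
    · grind
    · grind
    · rw [card_pair hab]
      exact hss M hM _ hL (ne_of_mem_of_not_mem' hxM hx)
  have hnotM : ∀ y, y ∈ ({a, b, c, d} : Finset α) → y ∈ M → y = a ∨ y = b := fun y hyL hyM => by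
    simpa [hinter] using mem_inter.mpr ⟨hyM, hyL⟩
  refine mem_collinearTriples_of_subset (hsd M hM _ hL (by rw [hinter, card_pair hab]))
    hcd (by grind) (by grind) fun y hy => mem_symmDiff.mpr ?_
  grind

/-- The points collinear with `a, b` lie on the `lam` lines through `a, b`, two on each. -/
lemma exists_not_mem_collinearTriples [Fintype α] {n lam : ℕ} (hD : IsDesign B n lam)
    (hn : 2 * lam + 2 < n) {a b : α} (hab : a ≠ b) :
    ∃ e, e ≠ a ∧ e ≠ b ∧ {e, a, b} ∉ collinearTriples B := by
  have hfin := Set.toFinite {L ∈ B | {a, b} ⊆ L}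
  set S := hfin.toFinset.biUnion fun L => L \ {a, b}
  have hS : S.card ≤ lam * 2 := by
    refine (card_biUnion_le_card_mul _ _ 2 fun L hL => ?_).trans_eq ?_
    · obtain ⟨hLB, habL⟩ := hfin.mem_toFinset.mp hL
      rw [card_sdiff_of_subset habL, hD.2.1 L hLB, card_pair hab]
    · rw [← Set.ncard_eq_toFinset_card _ hfin, hD.2.2 _ (card_pair hab)]
  have hcard : (insert a (insert b S)).card < (univ : Finset α).card :=
    calc (insert a (insert b S)).card ≤ S.card + 2 :=
          (card_insert_le _ _).trans (Nat.succ_le_succ (card_insert_le _ _))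
      _ < n := by omega
      _ = (univ : Finset α).card := hD.1.symm
  obtain ⟨e, -, he⟩ := exists_mem_notMem_of_card_lt_card hcard
  refine ⟨e, by grind, by grind, fun ⟨_, L, hLB, hL⟩ => he ?_⟩
  refine mem_insert_of_mem (mem_insert_of_mem (mem_biUnion.mpr ⟨L, ?_, ?_⟩))
  · exact hfin.mem_toFinset.mpr ⟨hLB, by grind⟩
  · grind

lemma isTriangleWitnessAt_of_mem (hss : Supersimple B) (hsd : SymmDiffCond B)
    (hRT : IsRegularTwoGraph (collinearTriples B)) {p b c d : α} (hpb : p ≠ b) (hpc : p ≠ c)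
    (hpd : p ≠ d) (hbc : b ≠ c) (hbd : b ≠ d) (hcd : c ≠ d) (hL : {p, b, c, d} ∈ B) :
    IsTriangleWitnessAt (collinearTriples B) p b c d := by
  refine ⟨mem_collinearTriples_of_subset hL hpb hpd hbd (by grind),
    mem_collinearTriples_of_subset hL hpc hpd hcd (by grind), fun x hxp hxb hxc hxd => ?_⟩
  have hx : x ∉ ({p, b, c, d} : Finset α) := by simp [hxp, hxb, hxc, hxd]
  have hpbc : {p, b, c} ∈ collinearTriples B :=
    mem_collinearTriples_of_subset hL hpb hpc hbc (by grind)
  have hpxd : {p, x, d} ∈ collinearTriples B ↔ {x, b, c} ∈ collinearTriples B := by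
    have hL₁ : {p, d, b, c} ∈ B := by rwa [insert_comm d, pair_comm d]
    have hL₂ : {b, c, p, d} ∈ B := by rwa [insert_comm c p, insert_comm b p]
    rw [pair_comm x d, insert_comm x b, pair_comm x c]
    exact ⟨mem_collinearTriples_of_mem_line hss hsd hL₁ hpb.symm hbd hpc.symm hcd hbc
        (by grind),
      mem_collinearTriples_of_mem_line hss hsd hL₂ hpb hpc hbd.symm hcd.symm hpd (by grind)⟩
  rw [hRT.parity (Ne.symm hxp) hpb hpc hxb hxc hbc, hpxd]
  exact iff_true_left hpbc

lemma IsTriangleWitnessAt.unique [Fintype α] {n lam : ℕ} (hD : IsDesign B n lam)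
    (hn : 2 * lam + 2 < n) (hRT : IsRegularTwoGraph (collinearTriples B)) {p b c w w' : α}
    (h : IsTriangleWitnessAt (collinearTriples B) p b c w)
    (h' : IsTriangleWitnessAt (collinearTriples B) p b c w') : w = w' := by
  by_contra hne
  obtain ⟨hpbw, hpcw, hw⟩ := h
  obtain ⟨hpbw', hpcw', hw'⟩ := h'
  obtain ⟨hpb, hpw, hbw⟩ := card_triple_eq_three_iff.mp hpbw.1
  obtain ⟨hpc, -, hcw⟩ := card_triple_eq_three_iff.mp hpcw.1
  obtain ⟨-, hpw', -⟩ := card_triple_eq_three_iff.mp hpbw'.1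
  have hpww' : {p, w, w'} ∈ collinearTriples B := by
    have := hw' w hpw.symm hbw.symm hcw.symm hne
    rw [pair_comm w b, pair_comm w c] at this
    exact this.mp (iff_of_true hpbw hpcw)
  obtain ⟨e, hew, hew', he⟩ := exists_not_mem_collinearTriples hD hn hne
  by_cases hep : e = p
  · exact he (hep ▸ hpww')
  have hpew : {p, e, w} ∈ collinearTriples B ↔ {p, e, w'} ∈ collinearTriples B := by
    by_cases heb : e = b
    · exact heb ▸ iff_of_true hpbw hpbw'
    by_cases hec : e = c
    · exact hec ▸ iff_of_true hpcw hpcw'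
    exact (hw e hep heb hec hew).symm.trans (hw' e hep heb hec hew')
  exact he (((hRT.parity (Ne.symm hep) hpw hpw' hew hew' hne).mp hpew).mp hpww')

lemma mem_iff_isTriangleWitnessAt [Fintype α] {n lam : ℕ} (hD : IsDesign B n lam)
    (hss : Supersimple B) (hsd : SymmDiffCond B) (hRT : IsRegularTwoGraph (collinearTriples B))
    (hn : 2 * lam + 2 < n) {p b c d : α} (hpb : p ≠ b) (hpc : p ≠ c) (hpd : p ≠ d)
    (hbc : b ≠ c) (hbd : b ≠ d) (hcd : c ≠ d) :
    {p, b, c, d} ∈ B ↔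
      {p, b, c} ∈ collinearTriples B ∧ IsTriangleWitnessAt (collinearTriples B) p b c d := by
  refine ⟨fun hL => ⟨mem_collinearTriples_of_subset hL hpb hpc hbc (by grind),
    isTriangleWitnessAt_of_mem hss hsd hRT hpb hpc hpd hbc hbd hcd hL⟩, fun ⟨hpbc, hd⟩ => ?_⟩
  obtain ⟨e, he, hL⟩ := exists_insert_mem_of_mem_collinearTriples hD.2.1 hpbc
  have hL' : {p, b, c, e} ∈ B := by convert hL using 1; grind
  have he' := isTriangleWitnessAt_of_mem hss hsd hRT hpb hpc (by grind) hbc (by grind)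
    (by grind) hL'
  rwa [← he'.unique hD hn hRT hd]

end Design

def Equiv.extendNe {α β : Type*} [DecidableEq α] [DecidableEq β] {a : α} {b : β}
    (g : {x // x ≠ a} ≃ {y // y ≠ b}) : α ≃ β :=
  (optionSubtypeNe a).symm.trans ((optionCongr g).trans (optionSubtypeNe b))

section ExtendNe
variable {α β : Type*} [DecidableEq α] [DecidableEq β] {a : α} {b : β}
  (g : {x // x ≠ a} ≃ {y // y ≠ b})

@[simp]
lemma Equiv.extendNe_self : g.extendNe a = b := by
  simp [extendNe]

@[simp]
lemma Equiv.extendNe_of_ne {x : α} (hx : x ≠ a) : g.extendNe x = g ⟨x, hx⟩ := by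
  simp [extendNe, optionSubtypeNe_symm_of_ne hx]

end ExtendNe

lemma mem_collinearTriples_iff_of_derivedGraph_iso {Ω₁ Ω₂ : Type*} [DecidableEq Ω₁]
    [DecidableEq Ω₂] {B₁ : Set (Finset Ω₁)} {B₂ : Set (Finset Ω₂)} {i₁ : Ω₁} {i₂ : Ω₂}
    (g : derivedGraph B₁ i₁ ≃g derivedGraph B₂ i₂) {b c : Ω₁} (hb : b ≠ i₁) (hc : c ≠ i₁)
    (hbc : b ≠ c) :
    {i₁, b, c} ∈ collinearTriples B₁ ↔
      {i₂, (g ⟨b, hb⟩ : Ω₂), (g ⟨c, hc⟩ : Ω₂)} ∈ collinearTriples B₂ := by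
  have hne : (⟨b, hb⟩ : {x // x ≠ i₁}) ≠ ⟨c, hc⟩ := by simpa using hbc
  have hadj := g.map_adj_iff (v := ⟨b, hb⟩) (w := ⟨c, hc⟩)
  exact ⟨fun h => (hadj.mpr ⟨hne, h⟩).2, fun h => (hadj.mp ⟨g.injective.ne hne, h⟩).2⟩

/-- Lemma 6.6: if two supersimple `2-(n_i,4,λ_i)` designs satisfying
(△), whose collinear triples form regular two-graphs, with `n_i > 2λ_i + 2`, have
isomorphic derived graphs (at points `∞_1`, `∞_2`), then the designs are isomorphic. -/
theorem designIso_of_derivedGraph_iso {Ω₁ Ω₂ : Type*}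
    [Fintype Ω₁] [DecidableEq Ω₁] [Fintype Ω₂] [DecidableEq Ω₂]
    {B₁ : Set (Finset Ω₁)} {B₂ : Set (Finset Ω₂)} {n₁ lam₁ n₂ lam₂ : ℕ}
    (hD₁ : IsDesign B₁ n₁ lam₁) (hss₁ : Supersimple B₁) (hsd₁ : SymmDiffCond B₁)
    (hRT₁ : IsRegularTwoGraph (collinearTriples B₁)) (hn₁ : 2 * lam₁ + 2 < n₁)
    (hD₂ : IsDesign B₂ n₂ lam₂) (hss₂ : Supersimple B₂) (hsd₂ : SymmDiffCond B₂)
    (hRT₂ : IsRegularTwoGraph (collinearTriples B₂)) (hn₂ : 2 * lam₂ + 2 < n₂)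
    (inf₁ : Ω₁) (inf₂ : Ω₂)
    (hiso : Nonempty (derivedGraph B₁ inf₁ ≃g derivedGraph B₂ inf₂)) :
    DesignIso B₁ B₂ := by
  obtain ⟨g⟩ := hiso
  set φ := g.toEquiv.extendNe
  have hφ : ∀ a b c, {a, b, c} ∈ collinearTriples B₁ ↔ {φ a, φ b, φ c} ∈ collinearTriples B₂ :=
    hRT₁.mem_iff_of_mem_iff_through hRT₂ φ inf₁ fun b c hb hc hbc => by
      simpa [φ, hb, hc] using mem_collinearTriples_iff_of_derivedGraph_iso g hb hc hbc
  refine ⟨φ, fun L => ?_⟩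
  by_cases hL : L.card = 4
  · obtain ⟨p, b, c, d, hpb, hpc, hpd, hbc, hbd, hcd, rfl⟩ := card_eq_four.mp hL
    simp only [map_insert, map_singleton, coe_toEmbedding]
    rw [mem_iff_isTriangleWitnessAt hD₁ hss₁ hsd₁ hRT₁ hn₁ hpb hpc hpd hbc hbd hcd,
      mem_iff_isTriangleWitnessAt hD₂ hss₂ hsd₂ hRT₂ hn₂ (by simpa) (by simpa) (by simpa)
        (by simpa) (by simpa) (by simpa), hφ, isTriangleWitnessAt_map_iff φ hφ]
  · exact iff_of_false (fun h => hL (hD₁.2.1 L h)) (fun h => hL (by simpa using hD₂.2.1 _ h))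
end
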